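/- Let R be a complete discrete valuation ring with fraction field K and residue field k. Every point of the Berkovich spectrum M(R[[S]] ⊗_R K) (with respect to the π-adic Banach norm) that specializes to the closed point of Spec k[[S]] is uniquely determined by the image of S under any representing character; consequently the natural map M(R[[S]] ⊗_R K) → M(K⟨S⟩) is injective, identifying M(R[[S]] ⊗_R K) with the union of the Berkovich open unit disc and the Gauss point, i.e., with the closure of the open unit disc inside M(K⟨S⟩). -/

import Mathlib

/-!
Common definitions for formalizing results of C. Kappen, "Uniformly rigid spaces".

`R` is a (complete) discrete valuation ring with uniformizer `π` and fraction field `K`.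
An `R`-algebra of formally finite (ff) type is a (topological) quotient of a mixed formal
power series ring `R[[S₁,…,S_m]]⟨T₁,…,T_n⟩`.  We realize the mixed power series ring
concretely as the subalgebra of `MvPowerSeries (Fin n) (MvPowerSeries (Fin m) R)`
consisting of power series in the variables `T` whose coefficients tend to `0` for the
`(π, S₁, …, S_m)`-adic topology of `R[[S₁,…,S_m]]`.
-/

set_option synthInstance.maxHeartbeats 800000
set_option maxHeartbeats 1600000

open scoped TensorProduct Pointwise

namespace URig

/-- Power series with only finitely many nonzero coefficients are restricted. -/
theorem support_finite_restricted {A : Type*} [CommRing A] {I : Ideal A} {n : ℕ}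
    {f : MvPowerSeries (Fin n) A}
    (h : {d : Fin n →₀ ℕ | MvPowerSeries.coeff d f ≠ 0}.Finite) (k : ℕ) :
    {d : Fin n →₀ ℕ | MvPowerSeries.coeff d f ∉ I ^ k}.Finite :=
  h.subset fun _ hd h0 => hd (by rw [h0]; exact Submodule.zero_mem _)

/-- The `A`-subalgebra of restricted power series in `n` variables over the adic ring
`(A, I)`: those multivariate power series whose coefficients tend to `0` in the `I`-adic
topology. -/
noncomputable def restrictedSubalgebra (A : Type*) [CommRing A] (I : Ideal A) (n : ℕ) :
    Subalgebra A (MvPowerSeries (Fin n) A) where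
  carrier := {f | ∀ k : ℕ, {d : Fin n →₀ ℕ | MvPowerSeries.coeff d f ∉ I ^ k}.Finite}
  zero_mem' := support_finite_restricted
    (Set.finite_empty.subset fun d hd => (hd (map_zero _)).elim)
  one_mem' := support_finite_restricted <|
    (Set.finite_singleton (0 : Fin n →₀ ℕ)).subset fun d hd => by
      by_contra hne
      rw [Set.mem_singleton_iff] at hne
      exact hd (by classical simp [MvPowerSeries.coeff_one, hne])
  add_mem' := by
    intro f g hf hg k
    refine ((hf k).union (hg k)).subset fun d hd => ?_
    by_contra h
    simp only [Set.mem_union, Set.mem_setOf_eq, not_or, not_not] at h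
    exact hd (by rw [map_add]; exact Ideal.add_mem _ h.1 h.2)
  mul_mem' := by
    classical
    intro f g hf hg k
    refine ((hf k).add (hg k)).subset fun d hd => ?_
    by_contra hsum
    refine hd ?_
    rw [MvPowerSeries.coeff_mul]
    refine Ideal.sum_mem _ ?_
    rintro ⟨d1, d2⟩ hp
    replace hp : d1 + d2 = d := by simpa using hp
    by_cases h1 : MvPowerSeries.coeff d1 f ∈ I ^ k
    · exact Ideal.mul_mem_right _ _ h1
    by_cases h2 : MvPowerSeries.coeff d2 g ∈ I ^ k
    · exact Ideal.mul_mem_left _ _ h2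
    exact absurd (hp ▸ Set.add_mem_add h1 h2) hsum
  algebraMap_mem' := fun a => support_finite_restricted <|
    (Set.finite_singleton (0 : Fin n →₀ ℕ)).subset fun d hd => by
      by_contra hne
      rw [Set.mem_singleton_iff] at hne
      exact hd (by classical simp [MvPowerSeries.algebraMap_apply, MvPowerSeries.coeff_C, hne])

/-- The ideal of definition `(π, S₁, …, S_m)` of the formal power series ring
`R[[S₁,…,S_m]]`. -/
noncomputable def defIdeal (R : Type*) [CommRing R] (π : R) (m : ℕ) :
    Ideal (MvPowerSeries (Fin m) R) :=
  Ideal.span ({MvPowerSeries.C (σ := Fin m) (R := R) π} ∪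
    Set.range (MvPowerSeries.X : Fin m → MvPowerSeries (Fin m) R))

/-- The mixed formal power series ring `R[[S₁,…,S_m]]⟨T₁,…,T_n⟩`: restricted power series
in the variables `T` over `R[[S]]` with its `(π, S)`-adic topology. -/
noncomputable abbrev MixedSeries (R : Type*) [CommRing R] (π : R) (m n : ℕ) : Type _ :=
  ↥(restrictedSubalgebra (MvPowerSeries (Fin m) R) (defIdeal R π m) n)

/-- The variable `Sᵢ` as an element of `R[[S₁,…,S_m]]⟨T₁,…,T_n⟩`. -/
noncomputable def Sgen (R : Type*) [CommRing R] (π : R) (m n : ℕ) (i : Fin m) :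
    MixedSeries R π m n :=
  ⟨algebraMap (MvPowerSeries (Fin m) R) (MvPowerSeries (Fin n) (MvPowerSeries (Fin m) R))
      (MvPowerSeries.X i),
    Subalgebra.algebraMap_mem _ _⟩

/-- The variable `Tⱼ` as an element of `R[[S₁,…,S_m]]⟨T₁,…,T_n⟩`. -/
noncomputable def Tgen (R : Type*) [CommRing R] (π : R) (m n : ℕ) (j : Fin n) :
    MixedSeries R π m n :=
  ⟨MvPowerSeries.X j, support_finite_restricted <|
    (Set.finite_singleton (Finsupp.single j 1)).subset fun d hd => by
      by_contra hne
      rw [Set.mem_singleton_iff] at hne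
      exact hd (by classical simp [MvPowerSeries.coeff_X, hne])⟩

/-- An `R`-algebra is of formally finite (ff) type if it is a (topological) quotient of a
mixed formal power series ring `R[[S₁,…,S_m]]⟨T₁,…,T_n⟩`.  (Any ring surjection from the
mixed power series ring is automatically a topological quotient map, all ideals of the
noetherian adic source being closed.) -/
def IsFFType (R : Type*) [CommRing R] (π : R) (A : Type*) [CommRing A] [Algebra R A] :
    Prop :=
  ∃ (m n : ℕ) (f : MixedSeries R π m n →ₐ[R] A), Function.Surjective f

/-- An `R`-algebra is of topologically finite (tf) type if it is a quotient of a restricted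
power series ring `R⟨T₁,…,T_n⟩ = R[[∅]]⟨T₁,…,T_n⟩`. -/
def IsTFType (R : Type*) [CommRing R] (π : R) (A : Type*) [CommRing A] [Algebra R A] :
    Prop :=
  ∃ (n : ℕ) (f : MixedSeries R π 0 n →ₐ[R] A), Function.Surjective f

/-- An `R`-model of ff type of a `K`-algebra `A`: an `R`-subalgebra `A₀ ⊆ A` of ff type
such that the natural map `A₀ ⊗_R K → A` is an isomorphism, i.e. (as `A₀ ⊆ A` and `π` acts
invertibly on `A`) such that every element of `A` becomes an element of `A₀` after
multiplication by a suitable power of `π`. -/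
def IsFFModel (R : Type*) [CommRing R] (π : R) {A : Type*} [CommRing A] [Algebra R A]
    (A₀ : Subalgebra R A) : Prop :=
  IsFFType R π ↥A₀ ∧ ∀ a : A, ∃ k : ℕ, algebraMap R A π ^ k * a ∈ A₀

/-- A `K`-algebra is semi-affinoid if it admits an `R`-model of ff type. -/
def IsSemiAffinoid (R : Type*) [CommRing R] (π : R) (A : Type*) [CommRing A]
    [Algebra R A] : Prop :=
  ∃ A₀ : Subalgebra R A, IsFFModel R π A₀

/-- `f` is power-bounded: `|f(x)| ≤ 1` at every maximal ideal `x`.  Since the residue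
field at a maximal ideal is a finite extension `L` of the complete discretely valued field
`K` and the valuation ring of `L` is the integral closure of `R` in `L`, this says exactly
that the residue class of `f` at every maximal ideal is integral over `R`. -/
def IsPowerBounded (R : Type*) [CommRing R] {A : Type*} [CommRing A] [Algebra R A]
    (f : A) : Prop :=
  ∀ 𝔪 : Ideal A, 𝔪.IsMaximal → IsIntegral R (Ideal.Quotient.mk 𝔪 f)

/-- `|x| < 1` for an element `x` of a (residue) `K`-algebra `L`: since the value group is
discrete, this says that `x^k/π` is integral over `R` for some `k`. -/
def AbsLtOne (R : Type*) [CommRing R] (π : R) (K : Type*) [Field K] [Algebra R K]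
    {L : Type*} [CommRing L] [Algebra R L] [Algebra K L] (x : L) : Prop :=
  ∃ k : ℕ, IsIntegral R (algebraMap K L (algebraMap R K π)⁻¹ * x ^ k)

/-- `f` is topologically quasi-nilpotent: `|f(x)| < 1` at every maximal ideal `x`. -/
def IsTopQuasiNilpotent (R : Type*) [CommRing R] (π : R) (K : Type*) [Field K]
    [Algebra R K] {A : Type*} [CommRing A] [Algebra R A] [Algebra K A] (f : A) : Prop :=
  ∀ 𝔪 : Ideal A, 𝔪.IsMaximal → AbsLtOne R π K (Ideal.Quotient.mk 𝔪 f)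

/-- The `R`-subalgebra `Å ⊆ A` of power-bounded elements. -/
noncomputable def powerBoundedSubalgebra (R : Type*) [CommRing R] (A : Type*) [CommRing A]
    [Algebra R A] : Subalgebra R A where
  carrier := {f | IsPowerBounded R f}
  add_mem' := fun {f g} hf hg 𝔪 hm => by
    simpa only [map_add] using (hf 𝔪 hm).add (hg 𝔪 hm)
  mul_mem' := fun {f g} hf hg 𝔪 hm => by
    simpa only [map_mul] using (hf 𝔪 hm).mul (hg 𝔪 hm)
  algebraMap_mem' := fun r 𝔪 hm => by
    have : (Ideal.Quotient.mk 𝔪) ((algebraMap R A) r) = algebraMap R (A ⧸ 𝔪) r := by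
      rw [IsScalarTower.algebraMap_apply R A (A ⧸ 𝔪) r]
      rfl
    rw [this]
    exact isIntegral_algebraMap

end URig

/-!
Two bounded `R`-algebra maps `φ₁, φ₂ : R⟦X⟧ → L` that agree on `X` agree on polynomials.
Splitting `f = X ^ n * g + trunc n f` shows that `φ₁ f - φ₂ f = φ₁(X) ^ n * (φ₁ g - φ₂ g)` is
bounded by a constant times `‖φ₁ X‖ ^ n`, which tends to `0` when `‖φ₁ X‖ < 1`. A `K`-algebra
map out of `K ⊗[R] R⟦X⟧` is determined by its restriction to `R⟦X⟧`.
-/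

namespace PowerSeries

open Filter Topology

variable {R L : Type*} [CommSemiring R] [NormedRing L] [Algebra R L]

theorem algHom_apply_coe_eq {φ₁ φ₂ : R⟦X⟧ →ₐ[R] L} (hX : φ₁ X = φ₂ X)
    (p : Polynomial R) : φ₁ (p : R⟦X⟧) = φ₂ p := by
  have := Polynomial.algHom_ext (f := φ₁.comp (Polynomial.coeToPowerSeries.algHom R))
    (g := φ₂.comp (Polynomial.coeToPowerSeries.algHom R)) (by simpa using hX)
  simpa using congr($this p)

theorem algHom_sub_algHom_eq_X_pow_mul {φ₁ φ₂ : R⟦X⟧ →ₐ[R] L} (hX : φ₁ X = φ₂ X) (n : ℕ)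
    (f : R⟦X⟧) :
    φ₁ f - φ₂ f =
      φ₁ X ^ n * (φ₁ (mk fun i ↦ coeff (i + n) f) - φ₂ (mk fun i ↦ coeff (i + n) f)) := by
  conv_lhs => rw [eq_X_pow_mul_shift_add_trunc n f]
  simp only [map_add, map_mul, map_pow, algHom_apply_coe_eq hX, hX]
  noncomm_ring

theorem algHom_ext_of_norm_X_lt_one {φ₁ φ₂ : R⟦X⟧ →ₐ[R] L} {M : ℝ}
    (hb₁ : ∀ f, ‖φ₁ f‖ ≤ M) (hb₂ : ∀ f, ‖φ₂ f‖ ≤ M) (hX : φ₁ X = φ₂ X) (hlt : ‖φ₁ X‖ < 1) :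
    φ₁ = φ₂ := by
  ext f
  rw [← sub_eq_zero, ← norm_le_zero_iff]
  have hlim : Tendsto (fun n ↦ ‖φ₁ X‖ ^ n * (2 * M)) atTop (𝓝 0) := by
    simpa using (tendsto_pow_atTop_nhds_zero_of_lt_one (norm_nonneg _) hlt).mul_const (2 * M)
  refine ge_of_tendsto hlim (eventually_atTop.2 ⟨1, fun n hn ↦ ?_⟩)
  set g : R⟦X⟧ := mk fun i ↦ coeff (i + n) f
  calc ‖φ₁ f - φ₂ f‖ = ‖φ₁ X ^ n * (φ₁ g - φ₂ g)‖ := by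
        rw [algHom_sub_algHom_eq_X_pow_mul hX n f]
    _ ≤ ‖φ₁ X‖ ^ n * ‖φ₁ g - φ₂ g‖ :=
      (norm_mul_le _ _).trans (mul_le_mul_of_nonneg_right (norm_pow_le' _ hn) (norm_nonneg _))
    _ ≤ ‖φ₁ X‖ ^ n * (2 * M) := by
      gcongr
      exact (norm_sub_le _ _).trans (by linarith [hb₁ g, hb₂ g])

end PowerSeries

open scoped TensorProduct in
open URig in
theorem stmt17_general (R : Type*) [CommRing R]
    (K : Type*) [Field K] [Algebra R K]
    (L : Type*) [NormedField L]
    [Algebra R L] [Algebra K L] [IsScalarTower R K L]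
    (χ₁ χ₂ : K ⊗[R] PowerSeries R →ₐ[K] L)
    (hb₁ : ∀ g : PowerSeries R, ‖χ₁ (Algebra.TensorProduct.includeRight g)‖ ≤ 1)
    (hb₂ : ∀ g : PowerSeries R, ‖χ₂ (Algebra.TensorProduct.includeRight g)‖ ≤ 1)
    (hX : χ₁ (Algebra.TensorProduct.includeRight (PowerSeries.X : PowerSeries R)) =
      χ₂ (Algebra.TensorProduct.includeRight (PowerSeries.X : PowerSeries R)))
    (hlt : ‖χ₁ (Algebra.TensorProduct.includeRight (PowerSeries.X : PowerSeries R))‖ < 1) :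
    χ₁ = χ₂ :=
  Algebra.TensorProduct.ext (Subsingleton.elim _ _)
    (PowerSeries.algHom_ext_of_norm_X_lt_one hb₁ hb₂ hX hlt)

open scoped TensorProduct in
open URig in
/-- Every point of the Berkovich spectrum `M(K ⊗_R R[[S]])` that
specializes to the closed point of `Spec k[[S]]` is uniquely determined by the image of
`S` under any representing character: if `χ₁, χ₂` are characters of `K ⊗_R R[[S]]` with
values in a complete nonarchimedean valued extension field `L` of `K` which are bounded
by `1` on `R[[S]]`, and if `χ₁(S) = χ₂(S)` has absolute value `< 1` (specialization to
the closed point of `Spec k[[S]]`), then `χ₁ = χ₂`.  (Consequently the natural map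
`M(K ⊗_R R[[S]]) → M(K⟨S⟩)` is injective, identifying `M(K ⊗_R R[[S]])` with the closure
of the Berkovich open unit disc — the open disc together with the Gauss point.) -/
theorem stmt17 (R : Type*) [CommRing R] [IsDomain R] [IsDiscreteValuationRing R]
    (π : R) (hπ : Irreducible π) [IsAdicComplete (Ideal.span {π}) R]
    (K : Type*) [Field K] [Algebra R K] [IsFractionRing R K]
    (L : Type*) [NormedField L] [CompleteSpace L] [IsUltrametricDist L]
    [Algebra R L] [Algebra K L] [IsScalarTower R K L]
    (hπL : ‖algebraMap K L (algebraMap R K π)‖ < 1)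
    (χ₁ χ₂ : K ⊗[R] PowerSeries R →ₐ[K] L)
    (hb₁ : ∀ g : PowerSeries R, ‖χ₁ (Algebra.TensorProduct.includeRight g)‖ ≤ 1)
    (hb₂ : ∀ g : PowerSeries R, ‖χ₂ (Algebra.TensorProduct.includeRight g)‖ ≤ 1)
    (hX : χ₁ (Algebra.TensorProduct.includeRight (PowerSeries.X : PowerSeries R)) =
      χ₂ (Algebra.TensorProduct.includeRight (PowerSeries.X : PowerSeries R)))
    (hlt : ‖χ₁ (Algebra.TensorProduct.includeRight (PowerSeries.X : PowerSeries R))‖ < 1) :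
    χ₁ = χ₂ :=
  stmt17_general R K L χ₁ χ₂ hb₁ hb₂ hX hlt
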